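/- Let x_0, …, x_n : [0,∞) → ℝ be C¹ functions with x_0(t) < … < x_n(t) and |ẋ_i(t)| ≤ L for all i, t, and suppose that |ẋ_{i+1}(t) − ẋ_i(t)| ≤ 2L for all i, t, where R_i(t) = ℓ_n/(x_{i+1}(t)−x_i(t)) and ℓ_n = 1/n. Then the piecewise-constant densities ρⁿ(·,t) = Σ_i R_i(t)·1_{[x_i(t),x_{i+1}(t))} satisfy W_1(ρⁿ(·,t), ρⁿ(·,s)) ≤ 2L·|t−s| for all s,t ≥ 0. -/

import Mathlib

open MeasureTheory

/-- Cumulative distribution function of a density on `ℝ`. -/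
noncomputable def densCdf (μ : ℝ → ℝ) (a : ℝ) : ℝ := ∫ u in Set.Iic a, μ u

/-- Pseudo-inverse of the CDF of a density on `ℝ`. -/
noncomputable def pseudoInv (μ : ℝ → ℝ) (z : ℝ) : ℝ := sInf {a : ℝ | z < densCdf μ a}

lemma vol_aux (a b c : ℝ) (hbc : b ≤ c) :
    (volume (Set.Ico b c ∩ Set.Iic a)).toReal = min a c - min a b := by
  have h1 : Set.Ioo b (min a c) ⊆ Set.Ico b c ∩ Set.Iic a := by
    intro u hu
    exact ⟨⟨hu.1.le, lt_of_lt_of_le hu.2 (min_le_right _ _)⟩,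
      (lt_of_lt_of_le hu.2 (min_le_left _ _)).le⟩
  have h2 : Set.Ico b c ∩ Set.Iic a ⊆ Set.Icc b (min a c) := by
    intro u hu
    exact ⟨hu.1.1, le_min hu.2 hu.1.2.le⟩
  have hv : volume (Set.Ico b c ∩ Set.Iic a) = ENNReal.ofReal (min a c - b) := by
    apply le_antisymm
    · calc volume (Set.Ico b c ∩ Set.Iic a) ≤ volume (Set.Icc b (min a c)) := measure_mono h2
        _ = ENNReal.ofReal (min a c - b) := Real.volume_Icc
    · calc ENNReal.ofReal (min a c - b) = volume (Set.Ioo b (min a c)) := Real.volume_Ioo.symm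
        _ ≤ volume (Set.Ico b c ∩ Set.Iic a) := measure_mono h1
  rw [hv]
  rcases le_total a b with hab | hab
  · have h3 : min a c = a := min_eq_left (hab.trans hbc)
    have h4 : min a b = a := min_eq_left hab
    rw [h3, h4, sub_self]
    rw [ENNReal.ofReal_eq_zero.2 (by linarith), ENNReal.toReal_zero]
  · have h4 : min a b = b := min_eq_right hab
    rw [h4, ENNReal.toReal_ofReal (by rcases le_total a c with h | h <;> simp [min_def] <;> split_ifs <;> linarith)]

lemma min_sub_mono {a b : ℝ} (hab : a ≤ b) {u v : ℝ} (huv : u ≤ v) :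
    min a v - min a u ≤ min b v - min b u := by
  simp only [min_def]
  split_ifs <;> linarith

/-- Uniform-in-`n` Lipschitz continuity in time, with respect to the
1-Wasserstein distance (computed via pseudo-inverses of CDFs), of the
piecewise-constant density associated with ordered particle trajectories whose
velocities are bounded by `L`. -/
theorem wasserstein_time_lipschitz
    (n : ℕ) (hn : 0 < n) (ℓ : ℝ) (hℓ : ℓ = 1 / n) (L : ℝ) (hL : 0 < L)
    (x : ℕ → ℝ → ℝ) (x' : ℕ → ℝ → ℝ)
    (hx : ∀ i ≤ n, ∀ t : ℝ, 0 ≤ t → HasDerivAt (x i) (x' i t) t)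
    (horder : ∀ i < n, ∀ t : ℝ, 0 ≤ t → x i t < x (i + 1) t)
    (hspeed : ∀ i ≤ n, ∀ t : ℝ, 0 ≤ t → |x' i t| ≤ L)
    (hreldiff : ∀ i < n, ∀ t : ℝ, 0 ≤ t → |x' (i + 1) t - x' i t| ≤ 2 * L)
    (ρ : ℝ → ℝ → ℝ)
    (hρ : ∀ t u : ℝ, ρ t u = ∑ i ∈ Finset.range n,
      if x i t ≤ u ∧ u < x (i + 1) t then ℓ / (x (i + 1) t - x i t) else 0) :
    ∀ s t : ℝ, 0 ≤ s → 0 ≤ t →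
      ∫ z in (0 : ℝ)..1, |pseudoInv (ρ t) z - pseudoInv (ρ s) z| ≤
        2 * L * |t - s| := by
  intro s t hs ht
  have hnR : (0:ℝ) < n := by exact_mod_cast hn
  have hℓpos : 0 < ℓ := by rw [hℓ]; positivity
  have hnℓ : (n:ℝ) * ℓ = 1 := by rw [hℓ]; field_simp
  -- monotonicity of positions across indices
  have hmono : ∀ τ : ℝ, 0 ≤ τ → ∀ i j, i ≤ j → j ≤ n → x i τ ≤ x j τ := by
    intro τ hτ i j hij hjn
    induction j, hij using Nat.le_induction with
    | base => exact le_rfl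
    | succ j hij ih =>
      exact (ih (by omega)).trans (horder j (by omega) τ hτ).le
  -- CDF formula
  have hcdf : ∀ τ : ℝ, 0 ≤ τ → ∀ a : ℝ, densCdf (ρ τ) a =
      ∑ i ∈ Finset.range n, (ℓ / (x (i+1) τ - x i τ)) * (min a (x (i+1) τ) - min a (x i τ)) := by
    intro τ hτ a
    unfold densCdf
    have hrw : ∀ u : ℝ, ρ τ u = ∑ i ∈ Finset.range n,
        (Set.Ico (x i τ) (x (i+1) τ)).indicator (fun _ => ℓ / (x (i+1) τ - x i τ)) u := by
      intro u
      rw [hρ]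
      refine Finset.sum_congr rfl fun i _ => ?_
      simp [Set.indicator_apply, Set.mem_Ico]
    simp_rw [hrw]
    rw [integral_finset_sum]
    · refine Finset.sum_congr rfl fun i hi => ?_
      rw [setIntegral_indicator measurableSet_Ico, Set.inter_comm, setIntegral_const]
      rw [measureReal_def, vol_aux a (x i τ) (x (i+1) τ) (horder i (Finset.mem_range.1 hi) τ hτ).le]
      rw [smul_eq_mul, mul_comm]
    · intro i hi
      rw [integrable_indicator_iff measurableSet_Ico]
      refine integrableOn_const (ne_of_lt ?_)
      calc (volume.restrict (Set.Iic a)) (Set.Ico (x i τ) (x (i+1) τ))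
          ≤ volume (Set.Ico (x i τ) (x (i+1) τ)) := Measure.restrict_le_self _
        _ < ⊤ := by rw [Real.volume_Ico]; exact ENNReal.ofReal_lt_top
  -- monotonicity of CDF
  have hFmono : ∀ τ : ℝ, 0 ≤ τ → ∀ a b : ℝ, a ≤ b → densCdf (ρ τ) a ≤ densCdf (ρ τ) b := by
    intro τ hτ a b hab
    rw [hcdf τ hτ, hcdf τ hτ]
    refine Finset.sum_le_sum fun i hi => ?_
    have hΔ : 0 < x (i+1) τ - x i τ := sub_pos.2 (horder i (Finset.mem_range.1 hi) τ hτ)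
    exact mul_le_mul_of_nonneg_left (min_sub_mono hab (horder i (Finset.mem_range.1 hi) τ hτ).le)
      (by positivity)
  -- segment formula
  have hseg : ∀ τ : ℝ, 0 ≤ τ → ∀ j, j < n → ∀ a : ℝ, x j τ ≤ a → a ≤ x (j+1) τ →
      densCdf (ρ τ) a = j * ℓ + (a - x j τ) * (ℓ / (x (j+1) τ - x j τ)) := by
    intro τ hτ j hj a ha1 ha2
    rw [hcdf τ hτ]
    have hterm : ∀ i ∈ Finset.range n,
        (ℓ / (x (i+1) τ - x i τ)) * (min a (x (i+1) τ) - min a (x i τ)) =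
        (if i < j then ℓ else 0) + (if i = j then (a - x j τ) * (ℓ / (x (j+1) τ - x j τ)) else 0) := by
      intro i hi
      have hin := Finset.mem_range.1 hi
      have hΔ : 0 < x (i+1) τ - x i τ := sub_pos.2 (horder i hin τ hτ)
      rcases lt_trichotomy i j with hij | hij | hij
      · have h1 : x (i+1) τ ≤ a := (hmono τ hτ (i+1) j (by omega) (by omega)).trans ha1
        have h2 : x i τ ≤ a := (hmono τ hτ i j (by omega) (by omega)).trans ha1
        rw [if_pos hij, if_neg (by omega), min_eq_right h1, min_eq_right h2]
        rw [add_zero]; field_simp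
      · subst hij
        rw [if_neg (by omega), if_pos rfl, min_eq_left ha2, min_eq_right ha1]
        ring
      · have h1 : a ≤ x i τ := ha2.trans (hmono τ hτ (j+1) i (by omega) (by omega))
        have h2 : a ≤ x (i+1) τ := h1.trans (horder i hin τ hτ).le
        rw [if_neg (by omega), if_neg (by omega), min_eq_left h2, min_eq_left h1]
        ring
    rw [Finset.sum_congr rfl hterm, Finset.sum_add_distrib]
    congr 1
    · rw [← Finset.sum_subset (Finset.range_subset_range.2 hj.le)
        (fun i _ hi => if_neg (by simp at hi; omega))]
      simp [Finset.sum_ite_of_true]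
    · rw [Finset.sum_ite_eq' (Finset.range n) j]
      simp [hj]
  -- pseudo-inverse formula
  have hform : ∀ τ : ℝ, 0 ≤ τ → ∀ j, j < n → ∀ θ : ℝ, 0 < θ → θ < 1 →
      pseudoInv (ρ τ) (j * ℓ + θ * ℓ) = x j τ + θ * (x (j+1) τ - x j τ) := by
    intro τ hτ j hj θ hθ0 hθ1
    have hΔ : 0 < x (j+1) τ - x j τ := sub_pos.2 (horder j hj τ hτ)
    set c := x j τ + θ * (x (j+1) τ - x j τ) with hc
    have hc1 : x j τ < c := by nlinarith
    have hc2 : c < x (j+1) τ := by nlinarith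
    have hFc : densCdf (ρ τ) c = j * ℓ + θ * ℓ := by
      rw [hseg τ hτ j hj c hc1.le hc2.le]
      field_simp
      ring
    have hset : {a : ℝ | j * ℓ + θ * ℓ < densCdf (ρ τ) a} = Set.Ioi c := by
      ext a
      simp only [Set.mem_setOf_eq, Set.mem_Ioi]
      constructor
      · intro h
        by_contra hac
        push_neg at hac
        exact absurd (lt_of_lt_of_le h ((hFmono τ hτ a c hac).trans_eq hFc)) (lt_irrefl _)
      · intro hca
        rcases le_total a (x (j+1) τ) with h1 | h1
        · rw [hseg τ hτ j hj a (hc1.le.trans hca.le) h1]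
          rw [← hFc, hseg τ hτ j hj c hc1.le hc2.le]
          have : 0 < ℓ / (x (j+1) τ - x j τ) := by positivity
          nlinarith
        · have h2 : densCdf (ρ τ) (x (j+1) τ) ≤ densCdf (ρ τ) a := hFmono τ hτ _ _ h1
          rw [hseg τ hτ j hj (x (j+1) τ) (horder j hj τ hτ).le (le_refl _)] at h2
          have h3 : (x (j+1) τ - x j τ) * (ℓ / (x (j+1) τ - x j τ)) = ℓ := by field_simp
          nlinarith
    unfold pseudoInv
    rw [hset, csInf_Ioi]
  -- Lipschitz bound for positions
  have hLip : ∀ i, i ≤ n → |x i t - x i s| ≤ L * |t - s| := by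
    intro i hi
    have := Convex.norm_image_sub_le_of_norm_hasDerivWithin_le
      (f := x i) (f' := fun τ => x' i τ) (s := Set.Ici (0:ℝ)) (C := L)
      (fun τ hτ => (hx i hi τ hτ).hasDerivWithinAt)
      (fun τ hτ => by rw [Real.norm_eq_abs]; exact hspeed i hi τ hτ)
      (convex_Ici 0) hs ht
    simpa [Real.norm_eq_abs] using this
  -- a.e. good z
  have hbadnull : ∀ᵐ z : ℝ, z ∉ (fun i : ℕ => (i:ℝ) * ℓ) '' (Set.Iic n) := by
    rw [← measure_eq_zero_iff_ae_notMem]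
    exact ((Set.finite_Iic n).image _).measure_zero _
  have hcancel : ∀ z : ℝ, z * (n:ℝ) * ℓ = z := by
    intro z; rw [mul_assoc, hnℓ, mul_one]
  have hgood : ∀ᵐ z ∂(volume.restrict (Set.Ioc (0:ℝ) 1)),
      ∃ j, j < n ∧ (j:ℝ) * ℓ < z ∧ z < ((j:ℝ)+1) * ℓ := by
    filter_upwards [ae_restrict_mem measurableSet_Ioc, ae_restrict_of_ae hbadnull]
      with z hz hzb
    have hz1 : z < 1 := by
      rcases lt_or_eq_of_le hz.2 with h | h
      · exact h
      · refine absurd ⟨n, Set.mem_Iic.2 le_rfl, ?_⟩ hzb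
        show (n:ℝ) * ℓ = z
        rw [hnℓ, h]
    have hzn : 0 < z * n := mul_pos hz.1 hnR
    set j := ⌊z * n⌋₊ with hj
    have hjle : (j:ℝ) ≤ z * n := Nat.floor_le hzn.le
    have hjlt : z * n < j + 1 := Nat.lt_floor_add_one _
    have hjn : j < n := by
      have h1 : z * n < n := by nlinarith
      exact_mod_cast hjle.trans_lt h1
    refine ⟨j, hjn, ?_, ?_⟩
    · rcases lt_or_eq_of_le hjle with h | h
      · calc (j:ℝ) * ℓ < z * (n:ℝ) * ℓ := mul_lt_mul_of_pos_right h hℓpos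
          _ = z := hcancel z
      · refine absurd ⟨j, Set.mem_Iic.2 hjn.le, ?_⟩ hzb
        show (j:ℝ) * ℓ = z
        rw [h, hcancel]
    · calc z = z * (n:ℝ) * ℓ := (hcancel z).symm
        _ < ((j:ℝ)+1) * ℓ := mul_lt_mul_of_pos_right hjlt hℓpos
  -- a.e. bound
  have hbound : ∀ᵐ z ∂(volume.restrict (Set.Ioc (0:ℝ) 1)),
      |pseudoInv (ρ t) z - pseudoInv (ρ s) z| ≤ L * |t - s| := by
    filter_upwards [hgood] with z hz
    obtain ⟨j, hjn, hz1, hz2⟩ := hz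
    set θ := z * n - j with hθ
    have hjmul : (j:ℝ) * ℓ * n = j := by
      rw [mul_assoc, mul_comm ℓ ((n:ℝ)), hnℓ, mul_one]
    have hjmul1 : ((j:ℝ)+1) * ℓ * n = (j:ℝ)+1 := by
      rw [mul_assoc, mul_comm ℓ ((n:ℝ)), hnℓ, mul_one]
    have hθ0 : 0 < θ := by
      have h := mul_lt_mul_of_pos_right hz1 hnR
      rw [hjmul] at h
      rw [hθ]; linarith
    have hθ1 : θ < 1 := by
      have h := mul_lt_mul_of_pos_right hz2 hnR
      rw [hjmul1] at h
      rw [hθ]; linarith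
    have hzeq : z = j * ℓ + θ * ℓ := by
      calc z = z * (n:ℝ) * ℓ := (hcancel z).symm
        _ = ↑j * ℓ + θ * ℓ := by rw [hθ]; ring
    rw [hzeq, hform t ht j hjn θ hθ0 hθ1, hform s hs j hjn θ hθ0 hθ1]
    have e1 : x j t + θ * (x (j+1) t - x j t) - (x j s + θ * (x (j+1) s - x j s)) =
        (1 - θ) * (x j t - x j s) + θ * (x (j+1) t - x (j+1) s) := by ring
    rw [e1]
    calc |(1 - θ) * (x j t - x j s) + θ * (x (j+1) t - x (j+1) s)|
        ≤ |(1 - θ) * (x j t - x j s)| + |θ * (x (j+1) t - x (j+1) s)| := abs_add_le _ _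
      _ = (1 - θ) * |x j t - x j s| + θ * |x (j+1) t - x (j+1) s| := by
          rw [abs_mul, abs_mul, abs_of_nonneg (by linarith), abs_of_nonneg hθ0.le]
      _ ≤ (1 - θ) * (L * |t - s|) + θ * (L * |t - s|) := by
          have h1 := mul_le_mul_of_nonneg_left (hLip j (by omega)) (by linarith : (0:ℝ) ≤ 1 - θ)
          have h2 := mul_le_mul_of_nonneg_left (hLip (j+1) (by omega)) hθ0.le
          linarith
      _ = L * |t - s| := by ring
  -- conclude
  rw [intervalIntegral.integral_of_le (by norm_num : (0:ℝ) ≤ 1)]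
  have hfin : volume (Set.Ioc (0:ℝ) 1) < ⊤ := by
    rw [Real.volume_Ioc]; exact ENNReal.ofReal_lt_top
  have hnorm := norm_setIntegral_le_of_norm_le_const_ae (μ := volume)
    (f := fun z => |pseudoInv (ρ t) z - pseudoInv (ρ s) z|) (C := L * |t - s|) hfin
    (by filter_upwards [hbound] with z hz; rw [Real.norm_eq_abs, abs_abs]; exact hz)
  have hvol : (volume (Set.Ioc (0:ℝ) 1)).toReal = 1 := by
    rw [Real.volume_Ioc]; norm_num
  rw [measureReal_def, hvol, mul_one] at hnorm
  calc ∫ z in Set.Ioc (0:ℝ) 1, |pseudoInv (ρ t) z - pseudoInv (ρ s) z|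
      ≤ ‖∫ z in Set.Ioc (0:ℝ) 1, |pseudoInv (ρ t) z - pseudoInv (ρ s) z|‖ := le_abs_self _
    _ ≤ L * |t - s| := hnorm
    _ ≤ 2 * L * |t - s| := by nlinarith [abs_nonneg (t - s)]
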